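/- arXiv:1402.3969 — 5 statements merged into one kernel-verified Lean document; each statement's English description precedes it below -/
import Mathlib

section
/- If k ≥ 2, A_i ⊆ 2^{[n_i]} for each i ∈ [k], and A_1, ..., A_k are cross-intersecting, then ∏_{i=1}^k |A_i| ≤ 2^{(∑_{i=1}^k n_i) - k}. -/
/-!
For two cross-intersecting families on a common ground set `U`, the complements of the members
of one family avoid the other, so `|A| + |B| ≤ 2^|U|` and hence `|A| |B| ≤ 2^(|U|-1) 2^(|U|-1)`.
When `U ⊆ V` and `B` lives on `V`, replacing `B` by its trace on `U` keeps the families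
cross-intersecting and loses at most a factor `2^(|V|-|U|)`, so
`|A_i| |A_j| ≤ 2^(n_i-1) 2^(n_j-1)` for every pair. Multiplying these bounds over all ordered
pairs `i ≠ j` gives `(∏ |A_i|)^(2(k-1)) ≤ (∏ 2^(n_i-1))^(2(k-1))`; take roots.
-/

open Finset

theorem Finset.prod_prod_erase_mul_eq_pow {ι M : Type*} [Fintype ι] [DecidableEq ι]
    [CommMonoid M] (a : ι → M) :
    ∏ i, ∏ j ∈ univ.erase i, a i * a j = (∏ i, a i) ^ (2 * (Fintype.card ι - 1)) := by
  have hswap : ∏ i, ∏ j ∈ univ.erase i, a j = ∏ j, ∏ _i ∈ univ.erase j, a j :=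
    prod_comm' (by simp [and_comm, eq_comm])
  simp only [prod_mul_distrib, hswap, prod_const, card_erase_of_mem (mem_univ _), card_univ,
    prod_pow, ← pow_add, two_mul]

theorem Finset.prod_le_prod_of_mul_le_mul {ι R : Type*} [Fintype ι] [CommSemiring R]
    [LinearOrder R] [IsStrictOrderedRing R] {a b : ι → R}
    (ha : ∀ i, 0 ≤ a i) (hb : ∀ i, 0 ≤ b i)
    (hι : 2 ≤ Fintype.card ι) (hab : ∀ i j, i ≠ j → a i * a j ≤ b i * b j) :
    ∏ i, a i ≤ ∏ i, b i := by
  classical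
  refine (pow_le_pow_iff_left₀ (prod_nonneg fun i _ => ha i) (prod_nonneg fun i _ => hb i)
    (n := 2 * (Fintype.card ι - 1)) (by omega)).1 ?_
  rw [← prod_prod_erase_mul_eq_pow, ← prod_prod_erase_mul_eq_pow]
  exact prod_le_prod (fun i _ => prod_nonneg fun j _ => mul_nonneg (ha i) (ha j))
    fun i _ => prod_le_prod (fun j _ => mul_nonneg (ha i) (ha j))
      fun j hj => hab i j (ne_of_mem_erase hj).symm

section CrossIntersecting

variable {α : Type*} [DecidableEq α] {U V : Finset α} {A B : Finset (Finset α)}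

theorem card_add_card_le_two_pow_of_cross_intersecting (hA : A ⊆ U.powerset)
    (hB : B ⊆ U.powerset) (hAB : ∀ a ∈ A, ∀ b ∈ B, (a ∩ b).Nonempty) :
    #A + #B ≤ 2 ^ #U := by
  have hcompl_inj : Set.InjOn (U \ ·) B := fun b hb c hc h => by
    rw [← Finset.sdiff_sdiff_eq_self (mem_powerset.1 (hB hb)),
      ← Finset.sdiff_sdiff_eq_self (mem_powerset.1 (hB hc))]
    exact congrArg (U \ ·) h
  have hdisj : Disjoint A (B.image (U \ ·)) := by
    refine disjoint_left.2 fun a ha hmem => ?_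
    obtain ⟨b, hb, rfl⟩ := mem_image.1 hmem
    obtain ⟨x, hx⟩ := hAB _ ha b hb
    exact (mem_sdiff.1 (mem_inter.1 hx).1).2 (mem_inter.1 hx).2
  calc #A + #B = #(A ∪ B.image (U \ ·)) := by
        rw [card_union_of_disjoint hdisj, card_image_of_injOn hcompl_inj]
    _ ≤ #U.powerset :=
        card_le_card (union_subset hA fun s hs => by
          obtain ⟨b, -, rfl⟩ := mem_image.1 hs
          exact mem_powerset.2 sdiff_subset)
    _ = 2 ^ #U := card_powerset U

theorem card_le_card_image_inter_mul_two_pow (hUV : U ⊆ V) (hB : B ⊆ V.powerset) :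
    #B ≤ #(B.image (· ∩ U)) * 2 ^ (#V - #U) := by
  calc #B ≤ #(B.image (· ∩ U) ×ˢ (V \ U).powerset) := by
        refine card_le_card_of_injOn (fun b => (b ∩ U, b \ U)) (fun b hb => ?_)
          fun b _ c _ h => ?_
        · exact mem_product.2 ⟨mem_image_of_mem _ hb,
            mem_powerset.2 (sdiff_subset_sdiff (mem_powerset.1 (hB hb)) subset_rfl)⟩
        · rw [← sup_inf_sdiff b U, ← sup_inf_sdiff c U]
          simp only [Prod.ext_iff] at h
          exact congrArg₂ (· ⊔ ·) h.1 h.2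
    _ = #(B.image (· ∩ U)) * 2 ^ (#V - #U) := by
        rw [card_product, card_powerset, card_sdiff_of_subset hUV]

theorem Nat.mul_le_mul_self_of_add_le_two_mul {x y c : ℕ} (h : x + y ≤ 2 * c) :
    x * y ≤ c * c := by
  nlinarith [sq_nonneg ((x : ℤ) - y)]

theorem card_mul_card_le_of_cross_intersecting_of_subset (hU : U.Nonempty) (hUV : U ⊆ V)
    (hA : A ⊆ U.powerset) (hB : B ⊆ V.powerset)
    (hAB : ∀ a ∈ A, ∀ b ∈ B, (a ∩ b).Nonempty) :
    #A * #B ≤ 2 ^ (#U - 1) * 2 ^ (#V - 1) := by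
  set B' := B.image (· ∩ U)
  have hB' : B' ⊆ U.powerset := fun t ht => by
    obtain ⟨b, -, rfl⟩ := mem_image.1 ht
    exact mem_powerset.2 inter_subset_right
  -- Since every `a ∈ A` lies in `U`, it meets `b` exactly where it meets the trace `b ∩ U`.
  have hAB' : ∀ a ∈ A, ∀ t ∈ B', (a ∩ t).Nonempty := fun a ha t ht => by
    obtain ⟨b, hb, rfl⟩ := mem_image.1 ht
    rw [← inter_assoc, inter_eq_left.2 ((inter_subset_left).trans (mem_powerset.1 (hA ha)))]
    exact hAB a ha b hb
  have hsum : #A + #B' ≤ 2 * 2 ^ (#U - 1) := by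
    rw [← pow_succ', Nat.sub_add_cancel hU.card_pos]
    exact card_add_card_le_two_pow_of_cross_intersecting hA hB' hAB'
  have hcard : #U ≤ #V := card_le_card hUV
  calc #A * #B ≤ #A * (#B' * 2 ^ (#V - #U)) :=
        Nat.mul_le_mul_left _ (card_le_card_image_inter_mul_two_pow hUV hB)
    _ = #A * #B' * 2 ^ (#V - #U) := (mul_assoc _ _ _).symm
    _ ≤ 2 ^ (#U - 1) * 2 ^ (#U - 1) * 2 ^ (#V - #U) :=
        Nat.mul_le_mul_right _ (Nat.mul_le_mul_self_of_add_le_two_mul hsum)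
    _ = 2 ^ (#U - 1) * 2 ^ (#V - 1) := by
        have := hU.card_pos
        rw [mul_assoc, ← pow_add]
        congr 2
        omega

theorem card_mul_card_le_of_cross_intersecting (hU : U.Nonempty) (hV : V.Nonempty)
    (hUV : U ⊆ V ∨ V ⊆ U) (hA : A ⊆ U.powerset) (hB : B ⊆ V.powerset)
    (hAB : ∀ a ∈ A, ∀ b ∈ B, (a ∩ b).Nonempty) :
    #A * #B ≤ 2 ^ (#U - 1) * 2 ^ (#V - 1) := by
  rcases hUV with hUV | hVU
  · exact card_mul_card_le_of_cross_intersecting_of_subset hU hUV hA hB hAB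
  · rw [mul_comm #A, mul_comm (2 ^ _)]
    exact card_mul_card_le_of_cross_intersecting_of_subset hV hVU hB hA
      fun b hb a ha => inter_comm a b ▸ hAB a ha b hb

end CrossIntersecting

/-- `k ≥ 2` cross-intersecting families `A_i ⊆ 2^{[n_i]}` satisfy
`∏ |A_i| ≤ 2^{(∑ n_i) - k}`. -/
theorem cross_intersecting_k_families_powerset_bound
    (k : ℕ) (hk : 2 ≤ k) (n : Fin k → ℕ) (hn : ∀ i, 1 ≤ n i)
    (𝒜 : Fin k → Finset (Finset ℕ))
    (h𝒜 : ∀ i, ∀ A ∈ 𝒜 i, A ⊆ Finset.Icc 1 (n i))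
    (hcross : ∀ i j, i ≠ j → ∀ A ∈ 𝒜 i, ∀ B ∈ 𝒜 j, (A ∩ B).Nonempty) :
    ∏ i, (𝒜 i).card ≤ 2 ^ ((∑ i, n i) - k) := by
  have hpair : ∀ i j, i ≠ j → #(𝒜 i) * #(𝒜 j) ≤ 2 ^ (n i - 1) * 2 ^ (n j - 1) := by
    intro i j hij
    simpa using card_mul_card_le_of_cross_intersecting
      (nonempty_Icc.2 (hn i)) (nonempty_Icc.2 (hn j))
      ((le_total (n i) (n j)).imp Icc_subset_Icc_right Icc_subset_Icc_right)
      (fun A hA => mem_powerset.2 (h𝒜 i A hA)) (fun B hB => mem_powerset.2 (h𝒜 j B hB))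
      (hcross i j hij)
  calc ∏ i, #(𝒜 i) ≤ ∏ i, 2 ^ (n i - 1) :=
        prod_le_prod_of_mul_le_mul (fun _ => Nat.zero_le _) (fun _ => Nat.zero_le _)
          (by simpa using hk) hpair
    _ = 2 ^ ((∑ i, n i) - k) := by
        rw [prod_pow_eq_pow_sum, sum_tsub_distrib _ fun i _ => hn i]
        simp
end

section
/- If X and Y are bases of a hereditary family H (i.e., maximal members of H with respect to inclusion), x ∈ X, and x ∉ Y, then |H(x)| < |H|/2, where H(x) = {H' ∈ H : x ∈ H'}. -/
/-!
Removing `x` maps the star `H(x)` injectively into the members of `H` avoiding `x`, and since `H`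
is hereditary the image lands in `H`. A base `Y` with `x ∉ Y` is missed by this map, as
`insert x Y ∈ H` would contradict maximality, so `|H(x)| < |H| - |H(x)|`.
-/

namespace Finset

variable {α : Type*} [DecidableEq α] {𝒜 : Finset (Finset α)} {s : Finset α} {a : α}

theorem card_memberSubfamily (a : α) (𝒜 : Finset (Finset α)) :
    #(𝒜.memberSubfamily a) = #{s ∈ 𝒜 | a ∈ s} :=
  card_image_of_injOn <| (erase_injOn' a).mono fun _ hs => (mem_filter.mp hs).2

theorem notMem_memberSubfamily_of_maximal (hs : Maximal (· ∈ 𝒜) s) (ha : a ∉ s) :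
    s ∉ 𝒜.memberSubfamily a := fun hmem =>
  ha <| hs.eq_of_le (mem_memberSubfamily.mp hmem).1 (subset_insert a s) ▸ mem_insert_self a s

theorem _root_.IsLowerSet.memberSubfamily_ssubset_nonMemberSubfamily
    (h : IsLowerSet (𝒜 : Set (Finset α))) (hs : Maximal (· ∈ 𝒜) s) (ha : a ∉ s) :
    𝒜.memberSubfamily a ⊂ 𝒜.nonMemberSubfamily a :=
  ssubset_iff_subset_ne.mpr ⟨h.memberSubfamily_subset_nonMemberSubfamily, fun heq =>
    notMem_memberSubfamily_of_maximal hs ha <| heq ▸ mem_nonMemberSubfamily.mpr ⟨hs.prop, ha⟩⟩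

theorem _root_.IsLowerSet.two_mul_card_filter_mem_lt_card
    (h : IsLowerSet (𝒜 : Set (Finset α))) (hs : Maximal (· ∈ 𝒜) s) (ha : a ∉ s) :
    2 * #{t ∈ 𝒜 | a ∈ t} < #𝒜 := by
  have hlt := card_lt_card (h.memberSubfamily_ssubset_nonMemberSubfamily hs ha)
  have hsum := card_memberSubfamily_add_card_nonMemberSubfamily a 𝒜
  rw [card_memberSubfamily] at hlt hsum
  omega

end Finset

theorem hereditary_two_bases_star_lt_half_general
    (H : Finset (Finset ℕ))
    (hher : ∀ S ∈ H, ∀ T ⊆ S, T ∈ H)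
    (Y : Finset ℕ)
    (hY : Y ∈ H) (hYbase : ∀ S ∈ H, Y ⊆ S → Y = S)
    (x : ℕ) (hxY : x ∉ Y) :
    2 * (H.filter (fun S => x ∈ S)).card < H.card := by
  have hlower : IsLowerSet (H : Set (Finset ℕ)) := fun S T hTS hS => hher S hS T hTS
  have hmax : Maximal (· ∈ H) Y := maximal_iff.mpr ⟨hY, hYbase⟩
  exact hlower.two_mul_card_filter_mem_lt_card hmax hxY

/-- If `X` and `Y` are bases of a hereditary family `H`, `x ∈ X` and `x ∉ Y`,
then `|H(x)| < |H|/2`, i.e. `2·|H(x)| < |H|`. -/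
theorem hereditary_two_bases_star_lt_half
    (H : Finset (Finset ℕ))
    (hher : ∀ S ∈ H, ∀ T ⊆ S, T ∈ H)
    (X Y : Finset ℕ)
    (hX : X ∈ H) (hXbase : ∀ S ∈ H, X ⊆ S → X = S)
    (hY : Y ∈ H) (hYbase : ∀ S ∈ H, Y ⊆ S → Y = S)
    (x : ℕ) (hxX : x ∈ X) (hxY : x ∉ Y) :
    2 * (H.filter (fun S => x ∈ S)).card < H.card :=
  hereditary_two_bases_star_lt_half_general H hher Y hY hYbase x hxY
end

section
/- If A and B are cross-intersecting subfamilies of 2^{[n]}, then |A|·|B| ≤ 4^{n-1}, i.e., |A|·|B| ≤ (2^{n-1})^2. -/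
/-! The complements `[n] \ A` of the members of `𝒜` are distinct subsets of `[n]`, and none of
them lies in `ℬ`, since it misses `A`. Hence `|𝒜| + |ℬ| ≤ 2^n ≤ 2 · 2^(n-1)` (also for `n = 0`,
where `n - 1` truncates to `0`), and AM–GM gives `|𝒜| |ℬ| ≤ ((|𝒜| + |ℬ|) / 2)^2 ≤ (2^(n-1))^2`. -/

open Finset

section CrossIntersecting

variable {α : Type*} [DecidableEq α] {U : Finset α} {𝒜 ℬ : Finset (Finset α)}

lemma disjoint_image_sdiff_of_cross_intersecting
    (hcross : ∀ A ∈ 𝒜, ∀ B ∈ ℬ, (A ∩ B).Nonempty) :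
    Disjoint (𝒜.image (U \ ·)) ℬ := by
  rw [disjoint_left]
  rintro _ hC hB
  obtain ⟨A, hA, rfl⟩ := mem_image.1 hC
  obtain ⟨x, hx⟩ := hcross A hA _ hB
  exact (mem_sdiff.1 (mem_inter.1 hx).2).2 (mem_inter.1 hx).1

lemma card_image_sdiff_of_forall_subset (h𝒜 : ∀ A ∈ 𝒜, A ⊆ U) :
    #(𝒜.image (U \ ·)) = #𝒜 :=
  card_image_of_injOn fun A hA A' hA' h => by
    simpa only [Finset.sdiff_sdiff_eq_self (h𝒜 A hA), Finset.sdiff_sdiff_eq_self (h𝒜 A' hA')]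
      using congrArg (U \ ·) h

lemma card_add_card_le_two_pow_card_of_cross_intersecting
    (h𝒜 : ∀ A ∈ 𝒜, A ⊆ U) (hℬ : ∀ B ∈ ℬ, B ⊆ U)
    (hcross : ∀ A ∈ 𝒜, ∀ B ∈ ℬ, (A ∩ B).Nonempty) :
    #𝒜 + #ℬ ≤ 2 ^ #U := by
  have hsub : 𝒜.image (U \ ·) ∪ ℬ ⊆ U.powerset := by
    refine union_subset (fun C hC => ?_) fun B hB => mem_powerset.2 (hℬ B hB)
    obtain ⟨A, -, rfl⟩ := mem_image.1 hC
    exact mem_powerset.2 sdiff_subset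
  simpa [card_union_of_disjoint (disjoint_image_sdiff_of_cross_intersecting hcross),
    card_image_sdiff_of_forall_subset h𝒜] using card_le_card hsub

end CrossIntersecting

lemma Nat.mul_le_sq_of_add_le_two_mul {a b m : ℕ} (h : a + b ≤ 2 * m) : a * b ≤ m ^ 2 := by
  refine Nat.le_of_mul_le_mul_left ?_ (by norm_num : 0 < 4)
  calc 4 * (a * b) = 4 * a * b := (mul_assoc ..).symm
    _ ≤ (a + b) ^ 2 := four_mul_le_sq_add a b
    _ ≤ (2 * m) ^ 2 := Nat.pow_le_pow_left h 2
    _ = 4 * m ^ 2 := by ring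

theorem cross_intersecting_powerset_product_bound_general
    (n : ℕ) (𝒜 ℬ : Finset (Finset ℕ))
    (h𝒜 : ∀ A ∈ 𝒜, A ⊆ Finset.Icc 1 n)
    (hℬ : ∀ B ∈ ℬ, B ⊆ Finset.Icc 1 n)
    (hcross : ∀ A ∈ 𝒜, ∀ B ∈ ℬ, (A ∩ B).Nonempty) :
    𝒜.card * ℬ.card ≤ (2 ^ (n - 1)) ^ 2 := by
  have hsum : #𝒜 + #ℬ ≤ 2 ^ n := by
    simpa using card_add_card_le_two_pow_card_of_cross_intersecting h𝒜 hℬ hcross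
  refine Nat.mul_le_sq_of_add_le_two_mul (hsum.trans ?_)
  rw [← pow_succ']
  exact Nat.pow_le_pow_right two_pos (by omega)

/-- Cross-intersecting subfamilies of `2^{[n]}` satisfy `|A|·|B| ≤ (2^{n-1})^2`. -/
theorem cross_intersecting_powerset_product_bound
    (n : ℕ) (hn : 1 ≤ n) (𝒜 ℬ : Finset (Finset ℕ))
    (h𝒜 : ∀ A ∈ 𝒜, A ⊆ Finset.Icc 1 n)
    (hℬ : ∀ B ∈ ℬ, B ⊆ Finset.Icc 1 n)
    (hcross : ∀ A ∈ 𝒜, ∀ B ∈ ℬ, (A ∩ B).Nonempty) :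
    𝒜.card * ℬ.card ≤ (2 ^ (n - 1)) ^ 2 :=
  cross_intersecting_powerset_product_bound_general n 𝒜 ℬ h𝒜 hℬ hcross
end

section
/- Let G ⊆ 2^{[n]} be hereditary and compressed with [n] ∉ G. Let g_0 = |{S ∈ G : 1 ∈ S, n ∉ S}| and g_1 = |{S ∈ G : 1 ∈ S, n ∈ S}|. If g_1 > 0 then g_0 > g_1 (i.e., g_0 ≠ g_1). -/
/-!
Let `A` and `B` be the members of `𝒢` containing `1` that do, resp. do not, contain `n`.
Erasing `n` maps `A` injectively into `B` by heredity. It misses a member of `B`: take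
`U ∈ A` of maximum size and `i ∈ [n] \ U` (there is one since `[n] ∉ 𝒢`). Compressing `n`
to `i` gives `T = U - n + i ∈ B`, while `T + n = U + i` is not in `𝒢` by maximality of `U`.
-/

open Finset

variable {α : Type*} [DecidableEq α]

lemma card_filter_mem_lt_card_filter_notMem {𝒜 : Finset (Finset α)} {a : α}
    (herase : ∀ S ∈ 𝒜, a ∈ S → S.erase a ∈ 𝒜) {T : Finset α} (hT : T ∈ 𝒜) (haT : a ∉ T)
    (hins : insert a T ∉ 𝒜) :
    #(𝒜.filter (a ∈ ·)) < #(𝒜.filter (a ∉ ·)) := by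
  have himage : (𝒜.filter (a ∈ ·)).image (·.erase a) ⊂ 𝒜.filter (a ∉ ·) := by
    refine ssubset_iff_of_subset ?_ |>.2 ⟨T, mem_filter.2 ⟨hT, haT⟩, ?_⟩
    · simp only [subset_iff, mem_image, mem_filter]
      rintro _ ⟨S, ⟨hS, haS⟩, rfl⟩
      exact ⟨herase S hS haS, notMem_erase a S⟩
    · simp only [mem_image, mem_filter, not_exists, not_and]
      rintro S ⟨hS, haS⟩ rfl
      exact hins (by rwa [insert_erase haS])
  calc #(𝒜.filter (a ∈ ·))
      = #((𝒜.filter (a ∈ ·)).image (·.erase a)) :=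
        (card_image_of_injOn ((erase_injOn' a).mono fun S hS => (mem_filter.1 hS).2)).symm
    _ < #(𝒜.filter (a ∉ ·)) := card_lt_card himage

/-- For a hereditary compressed `G ⊆ 2^{[n]}` with `[n] ∉ G`: if
`g_1 = |{S ∈ G : 1 ∈ S, n ∈ S}| > 0` then `g_0 = |{S ∈ G : 1 ∈ S, n ∉ S}| > g_1`. -/
theorem hereditary_compressed_g0_gt_g1
    (n : ℕ) (𝒢 : Finset (Finset ℕ))
    (hground : ∀ S ∈ 𝒢, S ⊆ Finset.Icc 1 n)
    (hher : ∀ S ∈ 𝒢, ∀ T ⊆ S, T ∈ 𝒢)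
    (hcomp : ∀ i j, 1 ≤ i → i < j → j ≤ n →
      ∀ S ∈ 𝒢, j ∈ S → i ∉ S → insert i (S.erase j) ∈ 𝒢)
    (hfull : Finset.Icc 1 n ∉ 𝒢)
    (hg1 : 0 < (𝒢.filter (fun S => 1 ∈ S ∧ n ∈ S)).card) :
    (𝒢.filter (fun S => 1 ∈ S ∧ n ∈ S)).card <
      (𝒢.filter (fun S => 1 ∈ S ∧ n ∉ S)).card := by
  obtain ⟨U, hU, hUmax⟩ := exists_max_image _ card (card_pos.1 hg1)
  obtain ⟨hUG, h1U, hnU⟩ := mem_filter.1 hU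
  obtain ⟨i, hi, hiU⟩ : ∃ i ∈ Icc 1 n, i ∉ U :=
    not_subset.1 fun h => hfull (subset_antisymm (hground U hUG) h ▸ hUG)
  have h1i : 1 < i := (mem_Icc.1 hi).1.lt_of_ne fun h => hiU (h ▸ h1U)
  have hin : i < n := (mem_Icc.1 hi).2.lt_of_ne fun h => hiU (h ▸ hnU)
  have hiUG : insert i U ∉ 𝒢 := fun h => (card_insert_of_notMem hiU ▸ hUmax _ <|
    mem_filter.2 ⟨h, mem_insert_of_mem h1U, mem_insert_of_mem hnU⟩).not_gt (Nat.lt_succ_self _)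
  simp only [← filter_filter]
  refine card_filter_mem_lt_card_filter_notMem (T := insert i (U.erase n)) ?_ ?_ ?_ ?_
  · exact fun S hS hnS => mem_filter.2 ⟨hher S (mem_filter.1 hS).1 _ (erase_subset n S),
      mem_erase.2 ⟨by omega, (mem_filter.1 hS).2⟩⟩
  · exact mem_filter.2 ⟨hcomp i n (by omega) hin le_rfl U hUG hnU hiU,
      mem_insert_of_mem (mem_erase.2 ⟨by omega, h1U⟩)⟩
  · simp [hin.ne']
  · rw [insert_comm, insert_erase hnU]
    exact fun h => hiUG (mem_filter.1 h).1
end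

section
/- Suppose A, B ⊆ 2^{[n]} are cross-intersecting and B is compressed. If A' ∈ A with n ∈ A' and B' ⊆ [n-1] satisfies B' ∪ {n} ∈ B and (A' \ {n}) ∩ B' = ∅, then B' = [n-1] \ (A' \ {n}). That is, B' must be the full complement of A' \ {n} in [n-1]. -/
/-!
Every element of `B'` avoids `A' \ {n}` and lies in `[n-1]`. Conversely, if some
`i ∈ [n-1] \ A'` were missing from `B'`, compressing `n` to `i` in `B' ∪ {n}` would put
`B' ∪ {i}` in `B`; but `B' ∪ {i}` is disjoint from `A'`, contradicting cross-intersection.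
-/

namespace Finset

variable {α : Type*} [DecidableEq α]

theorem mem_of_inter_insert_nonempty {s t : Finset α} {a : α}
    (h : (s ∩ insert a t).Nonempty) (hst : Disjoint s t) : a ∈ s := by
  obtain ⟨x, hx⟩ := h
  obtain ⟨hxs, hx⟩ := mem_inter.1 hx
  rcases mem_insert.1 hx with rfl | hxt
  · exact hxs
  · exact absurd hxt (disjoint_left.1 hst hxs)

theorem disjoint_of_disjoint_erase {s t : Finset α} {a : α}
    (h : Disjoint (s.erase a) t) (ha : a ∉ t) : Disjoint s t := by
  rwa [disjoint_erase_comm, erase_eq_of_notMem ha] at h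

end Finset

open Finset in
theorem bad_partner_unique_general
    (n : ℕ) (𝒜 ℬ : Finset (Finset ℕ))
    (hcross : ∀ A ∈ 𝒜, ∀ B ∈ ℬ, (A ∩ B).Nonempty)
    (hℬcomp : ∀ i j, 1 ≤ i → i < j → j ≤ n →
      ∀ S ∈ ℬ, j ∈ S → i ∉ S → insert i (S.erase j) ∈ ℬ)
    (A' : Finset ℕ) (hA' : A' ∈ 𝒜)
    (B' : Finset ℕ) (hB'sub : B' ⊆ Finset.Icc 1 (n - 1))
    (hB'mem : insert n B' ∈ ℬ)
    (hdisj : (A'.erase n) ∩ B' = ∅) :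
    B' = Finset.Icc 1 (n - 1) \ (A'.erase n) := by
  have hnB' : n ∉ B' := fun h => by have := mem_Icc.1 (hB'sub h); omega
  have hdisj' : Disjoint (A'.erase n) B' := disjoint_iff_inter_eq_empty.2 hdisj
  refine Subset.antisymm (subset_sdiff.2 ⟨hB'sub, hdisj'.symm⟩) fun i hi => ?_
  obtain ⟨hi, hiA⟩ := mem_sdiff.1 hi
  obtain ⟨hi1, hin⟩ := mem_Icc.1 hi
  by_contra hiB
  have hshift : insert i B' ∈ ℬ := by
    have := hℬcomp i n hi1 (by omega) le_rfl _ hB'mem (mem_insert_self n B')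
      fun h => (mem_insert.1 h).elim (by omega) hiB
    rwa [erase_insert hnB'] at this
  have hiA' : i ∈ A' := mem_of_inter_insert_nonempty (hcross A' hA' _ hshift)
    (disjoint_of_disjoint_erase hdisj' hnB')
  exact hiA (mem_erase.2 ⟨by omega, hiA'⟩)

/-- Uniqueness of the "bad" partner: if `A`, `B ⊆ 2^{[n]}` are cross-intersecting,
`B` is compressed, `A' ∈ A` with `n ∈ A'`, `B' ⊆ [n-1]`, `B' ∪ {n} ∈ B` and
`(A' \ {n}) ∩ B' = ∅`, then `B' = [n-1] \ (A' \ {n})`. -/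
theorem bad_partner_unique
    (n : ℕ) (hn : 1 ≤ n) (𝒜 ℬ : Finset (Finset ℕ))
    (h𝒜 : ∀ A ∈ 𝒜, A ⊆ Finset.Icc 1 n)
    (hℬ : ∀ B ∈ ℬ, B ⊆ Finset.Icc 1 n)
    (hcross : ∀ A ∈ 𝒜, ∀ B ∈ ℬ, (A ∩ B).Nonempty)
    (hℬcomp : ∀ i j, 1 ≤ i → i < j → j ≤ n →
      ∀ S ∈ ℬ, j ∈ S → i ∉ S → insert i (S.erase j) ∈ ℬ)
    (A' : Finset ℕ) (hA' : A' ∈ 𝒜) (hnA' : n ∈ A')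
    (B' : Finset ℕ) (hB'sub : B' ⊆ Finset.Icc 1 (n - 1))
    (hB'mem : insert n B' ∈ ℬ)
    (hdisj : (A'.erase n) ∩ B' = ∅) :
    B' = Finset.Icc 1 (n - 1) \ (A'.erase n) :=
  bad_partner_unique_general n 𝒜 ℬ hcross hℬcomp A' hA' B' hB'sub hB'mem hdisj
end
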